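/- arXiv:2605.24730 — 13 statements merged into one kernel-verified Lean document; each statement's English description precedes it below -/
import Mathlib

section
/- Suppose g : ℝ → ℝ is continuous with |g(r)| ≤ L₀ for all r, D : ℝ × ℝ → ℝ is continuous, for every b the map r ↦ D(r,b) is minimized at r = b, and there is K < ∞ such that |r − b| ≥ K implies D(r,b) − D(b,b) ≥ 2L₀ + 1 for all b. If for each b the function r ↦ g(r) − D(r,b) has a unique maximizer R(b) over ℝ, then R : ℝ → ℝ is continuous, and consequently the used-report set {R(b) : b ∈ ℝ} is an order-connected subset (an interval) of ℝ. -/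
/-- Proposition 3.1 (continuity) and Theorem 3.1 (no holes): with a bounded
continuous strategic payoff `g`, a continuous coercive reporting cost `D`
minimized at the anchor, the sender's unique optimal report `R b` is continuous
in the anchor `b`, and hence the used-report set is an interval. -/
theorem report_continuous_and_no_holes
    (g : ℝ → ℝ) (D : ℝ → ℝ → ℝ) (R : ℝ → ℝ) (L₀ K : ℝ)
    (hg : Continuous g)
    (hgbd : ∀ r, |g r| ≤ L₀)
    (hD : Continuous fun p : ℝ × ℝ => D p.1 p.2)
    (hmin : ∀ r b, D b b ≤ D r b)
    (hcoer : ∀ r b, K ≤ |r - b| → 2 * L₀ + 1 ≤ D r b - D b b)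
    (hmax : ∀ b r, g r - D r b ≤ g (R b) - D (R b) b)
    (huniq : ∀ b r, g r - D r b = g (R b) - D (R b) b → r = R b) :
    Continuous R ∧ (Set.range R).OrdConnected := by
  -- Step 1: the optimal report stays within `K` of the anchor.
  have hKb : ∀ b, |R b - b| < K := by
    intro b
    by_contra h
    push_neg at h
    have h1 := hcoer (R b) b h
    have h2 := hmax b b
    have h3 := abs_le.mp (hgbd (R b))
    have h4 := abs_le.mp (hgbd b)
    linarith
  -- Step 2: continuity of R via sequences.
  have hcont : Continuous R := by
    rw [continuous_iff_seqContinuous]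
    intro x b hx
    apply Filter.tendsto_of_subseq_tendsto
    intro ns hns
    -- y is the subsequence of anchors; it still tends to b.
    set y : ℕ → ℝ := fun n => x (ns n) with hy
    have hyb : Filter.Tendsto y Filter.atTop (nhds b) := hx.comp hns
    -- y is bounded, so R ∘ y lies in a compact interval.
    obtain ⟨hi, hhi⟩ := hyb.bddAbove_range
    obtain ⟨lo, hlo⟩ := hyb.bddBelow_range
    have hmem : ∀ n, R (y n) ∈ Set.Icc (lo - K) (hi + K) := by
      intro n
      have h1 := hKb (y n)
      have h2 := abs_lt.mp h1
      have h3 : y n ≤ hi := hhi ⟨n, rfl⟩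
      have h4 : lo ≤ y n := hlo ⟨n, rfl⟩
      constructor <;> [linarith [h2.1]; linarith [h2.2]]
    obtain ⟨r', hr'mem, φ, hφ, hr'⟩ :=
      (isCompact_Icc (a := lo - K) (b := hi + K)).tendsto_subseq hmem
    -- the anchors along the sub-subsequence tend to b
    have hyφ : Filter.Tendsto (fun n => y (φ n)) Filter.atTop (nhds b) :=
      hyb.comp hφ.tendsto_atTop
    -- pass the optimality inequality to the limit
    have hDc : ∀ {u v : ℕ → ℝ} {cu cv : ℝ},
        Filter.Tendsto u Filter.atTop (nhds cu) →
        Filter.Tendsto v Filter.atTop (nhds cv) →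
        Filter.Tendsto (fun n => D (u n) (v n)) Filter.atTop (nhds (D cu cv)) := by
      intro u v cu cv hu hv
      exact (hD.tendsto (cu, cv)).comp (hu.prodMk_nhds hv)
    have hlimopt : ∀ r : ℝ, g r - D r b ≤ g r' - D r' b := by
      intro r
      have hle : ∀ n, g r - D r (y (φ n)) ≤
          g (R (y (φ n))) - D (R (y (φ n))) (y (φ n)) := fun n => hmax _ r
      have hL : Filter.Tendsto (fun n => g r - D r (y (φ n))) Filter.atTop
          (nhds (g r - D r b)) :=
        Filter.Tendsto.sub tendsto_const_nhds (hDc tendsto_const_nhds hyφ)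
      have hRt : Filter.Tendsto (fun n => g (R (y (φ n))) - D (R (y (φ n))) (y (φ n)))
          Filter.atTop (nhds (g r' - D r' b)) :=
        Filter.Tendsto.sub ((hg.tendsto r').comp hr') (hDc hr' hyφ)
      exact le_of_tendsto_of_tendsto' hL hRt hle
    have hr'eq : r' = R b := by
      apply huniq b r'
      exact le_antisymm (hmax b r') (hlimopt (R b))
    exact ⟨φ, hr'eq ▸ hr'⟩
  refine ⟨hcont, ?_⟩
  -- Step 3: the range of a continuous function on ℝ is order-connected.
  have : IsPreconnected (Set.range R) := by
    rw [← Set.image_univ]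
    exact isPreconnected_univ.image R hcont.continuousOn
  exact this.ordConnected
end

section
/- Suppose g : ℝ → ℝ satisfies |g(r)| ≤ L₀ for all r, D : ℝ × ℝ → ℝ satisfies D(b,b) ≤ D(r,b) for all r,b, and there is K < ∞ such that |r − b| ≥ K implies D(r,b) − D(b,b) ≥ 2L₀ + 1 for all b. If for each b the point R(b) maximizes r ↦ g(r) − D(r,b) over ℝ, then |R(b) − b| ≤ K for every b. If in addition R is continuous, then R is surjective: {R(b) : b ∈ ℝ} = ℝ. -/
/-- Uniform distortion bound and Corollary 3.1 (full use): equilibrium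
reports stay within distance `K` of the anchor, and if the report rule is
continuous it uses the entire real message line. -/
theorem report_distortion_bound_and_full_use
    (g : ℝ → ℝ) (D : ℝ → ℝ → ℝ) (R : ℝ → ℝ) (L₀ K : ℝ)
    (hgbd : ∀ r, |g r| ≤ L₀)
    (hmin : ∀ r b, D b b ≤ D r b)
    (hcoer : ∀ r b, K ≤ |r - b| → 2 * L₀ + 1 ≤ D r b - D b b)
    (hmax : ∀ b r, g r - D r b ≤ g (R b) - D (R b) b) :
    (∀ b, |R b - b| ≤ K) ∧
      (Continuous R → Function.Surjective R) := by
  have hbound : ∀ b, |R b - b| ≤ K := by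
    intro b
    by_contra h
    push_neg at h
    have h1 := hcoer (R b) b h.le
    have h2 := hmax b b
    have h3 : D (R b) b - D b b ≤ g (R b) - g b := by linarith
    have h4 := abs_le.mp (hgbd (R b))
    have h5 := abs_le.mp (hgbd b)
    linarith
  refine ⟨hbound, fun hc y => ?_⟩
  have hK : 0 ≤ K := le_trans (abs_nonneg _) (hbound 0)
  have h1 : R (y - K) ≤ y := by
    have := abs_le.mp (hbound (y - K)); linarith [this.2]
  have h2 : y ≤ R (y + K) := by
    have := abs_le.mp (hbound (y + K)); linarith [this.1]
  have := intermediate_value_uIcc (a := y - K) (b := y + K) hc.continuousOn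
  have hy : y ∈ Set.uIcc (R (y - K)) (R (y + K)) := by
    rw [Set.mem_uIcc]; left; exact ⟨h1, h2⟩
  obtain ⟨b, _, hb⟩ := this hy
  exact ⟨b, hb⟩
end

section
/- Let D : ℝ × ℝ → ℝ be such that for every b, ∂₁D(b,b) = 0, and there are constants κ > 0, K > 0 such that for all b, the map r ↦ ∂₁D(r,b) is differentiable with derivative at least κ at every r with |r − b| ≤ K. Let h : ℝ → ℝ satisfy h(r) → 0 as r → +∞ and as r → −∞. Suppose (r_n) and (b_n) are sequences with |r_n − b_n| ≤ K for all n, ∂₁D(r_n, b_n) = h(r_n) for all n, and |r_n| → ∞. Then |r_n − b_n| → 0. -/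
/-- Corollary 3.3 (tail reversion): if the marginal strategic benefit `h`
vanishes in both tails, reports satisfying the sender first-order condition
with `|r_n - b_n| ≤ K` and `|r_n| → ∞` revert to their anchors:
`|r_n - b_n| → 0`. -/
theorem tail_reversion
    (D D₁ : ℝ → ℝ → ℝ) (h : ℝ → ℝ) (κ K : ℝ)
    (hD₁ : ∀ r b, HasDerivAt (fun r' => D r' b) (D₁ r b) r)
    (hκ : 0 < κ) (hK : 0 < K)
    (hmin : ∀ b : ℝ, D₁ b b = 0)
    (hcurv : ∀ b r, |r - b| ≤ K →
      ∃ d : ℝ, HasDerivAt (fun r' => D₁ r' b) d r ∧ κ ≤ d)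
    (htop : Filter.Tendsto h Filter.atTop (nhds 0))
    (hbot : Filter.Tendsto h Filter.atBot (nhds 0))
    (r b : ℕ → ℝ)
    (hbound : ∀ n, |r n - b n| ≤ K)
    (hfoc : ∀ n, D₁ (r n) (b n) = h (r n))
    (hdiv : Filter.Tendsto (fun n => |r n|) Filter.atTop Filter.atTop) :
    Filter.Tendsto (fun n => |r n - b n|) Filter.atTop (nhds 0) := by
  classical
  -- Key pointwise bound from the mean value theorem:
  have key : ∀ b₀ r₀ : ℝ, |r₀ - b₀| ≤ K → κ * |r₀ - b₀| ≤ |D₁ r₀ b₀| := by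
    intro b₀ r₀ hb
    set f : ℝ → ℝ := fun x => D₁ x b₀ with hf
    set f' : ℝ → ℝ := fun x =>
      if hx : |x - b₀| ≤ K then (hcurv b₀ x hx).choose else 0 with hf'
    have hderiv : ∀ x, |x - b₀| ≤ K → HasDerivAt f (f' x) x ∧ κ ≤ f' x := by
      intro x hx
      have := (hcurv b₀ x hx).choose_spec
      simp only [hf', dif_pos hx]
      exact this
    rcases lt_trichotomy r₀ b₀ with hlt | heq | hgt
    · -- r₀ < b₀, use MVT on [r₀, b₀]
      have hmem : ∀ x ∈ Set.Icc r₀ b₀, |x - b₀| ≤ K := by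
        intro x hx
        rw [abs_le]
        have hrb := abs_le.mp hb
        exact ⟨by linarith [hx.1, hrb.1], by linarith [hx.2, hK.le]⟩
      have hmem' : ∀ x ∈ Set.Icc r₀ b₀, |x - b₀| ≤ K := hmem
      have hcont : ContinuousOn f (Set.Icc r₀ b₀) := fun x hx =>
        ((hderiv x (hmem x hx)).1.continuousAt).continuousWithinAt
      obtain ⟨c, hc, hceq⟩ := exists_hasDerivAt_eq_slope f f' hlt hcont
        (fun x hx => (hderiv x (hmem x (Set.mem_Icc_of_Ioo hx))).1)
      have hcK : |c - b₀| ≤ K := hmem c (Set.mem_Icc_of_Ioo hc)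
      have hκc : κ ≤ f' c := (hderiv c hcK).2
      have h0 : f b₀ = 0 := hmin b₀
      rw [h0] at hceq
      -- f' c = (0 - f r₀) / (b₀ - r₀)
      have hpos : (0:ℝ) < b₀ - r₀ := by linarith
      have : κ * (b₀ - r₀) ≤ -(f r₀) := by
        have h1 := mul_le_mul_of_nonneg_right hκc hpos.le
        rw [hceq, div_mul_cancel₀ _ (ne_of_gt hpos)] at h1
        linarith
      have habs : |r₀ - b₀| = b₀ - r₀ := by rw [abs_sub_comm]; exact abs_of_pos hpos
      calc κ * |r₀ - b₀| = κ * (b₀ - r₀) := by rw [habs]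
        _ ≤ -(f r₀) := this
        _ ≤ |f r₀| := neg_le_abs _
    · simp [heq, hmin b₀, abs_nonneg]
    · -- b₀ < r₀, MVT on [b₀, r₀]
      have hmem : ∀ x ∈ Set.Icc b₀ r₀, |x - b₀| ≤ K := by
        intro x hx
        rw [abs_le]
        constructor
        · linarith [hx.1]
        · have := abs_le.mp hb |>.2; linarith [hx.2]
      have hcont : ContinuousOn f (Set.Icc b₀ r₀) := fun x hx =>
        ((hderiv x (hmem x hx)).1.continuousAt).continuousWithinAt
      obtain ⟨c, hc, hceq⟩ := exists_hasDerivAt_eq_slope f f' hgt hcont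
        (fun x hx => (hderiv x (hmem x (Set.mem_Icc_of_Ioo hx))).1)
      have hcK : |c - b₀| ≤ K := hmem c (Set.mem_Icc_of_Ioo hc)
      have hκc : κ ≤ f' c := (hderiv c hcK).2
      have h0 : f b₀ = 0 := hmin b₀
      rw [h0] at hceq
      have hpos : (0:ℝ) < r₀ - b₀ := by linarith
      have : κ * (r₀ - b₀) ≤ f r₀ := by
        have h1 := mul_le_mul_of_nonneg_right hκc hpos.le
        rw [hceq, div_mul_cancel₀ _ (ne_of_gt hpos)] at h1
        linarith
      have habs : |r₀ - b₀| = r₀ - b₀ := abs_of_pos hpos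
      calc κ * |r₀ - b₀| = κ * (r₀ - b₀) := by rw [habs]
        _ ≤ f r₀ := this
        _ ≤ |f r₀| := le_abs_self _
  -- h (r n) → 0
  have hhr : Filter.Tendsto (fun n => h (r n)) Filter.atTop (nhds 0) := by
    rw [Metric.tendsto_atTop]
    intro ε hε
    have h1 : ∀ᶠ x in Filter.atTop, dist (h x) 0 < ε :=
      htop.eventually (Metric.ball_mem_nhds (0:ℝ) hε)
    have h2 : ∀ᶠ x in Filter.atBot, dist (h x) 0 < ε :=
      hbot.eventually (Metric.ball_mem_nhds (0:ℝ) hε)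
    obtain ⟨A, hA⟩ := Filter.eventually_atTop.mp h1
    obtain ⟨B, hB⟩ := Filter.eventually_atBot.mp h2
    set M : ℝ := max |A| |B| + 1 with hM
    obtain ⟨N, hN⟩ := Filter.eventually_atTop.mp (hdiv.eventually_ge_atTop M)
    refine ⟨N, fun n hn => ?_⟩
    have hMr : M ≤ |r n| := hN n hn
    have hMr' : max |A| |B| + 1 ≤ |r n| := hM ▸ hMr
    rcases le_or_gt 0 (r n) with hr0 | hr0
    · have : A ≤ r n := by
        have h1 : |r n| = r n := abs_of_nonneg hr0
        linarith [le_abs_self A, le_max_left |A| |B|]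
      exact hA (r n) this
    · have : r n ≤ B := by
        have h1 : |r n| = -(r n) := abs_of_neg hr0
        linarith [neg_abs_le B, le_max_right |A| |B|]
      exact hB (r n) this
  -- squeeze
  have hle : ∀ n, |r n - b n| ≤ |h (r n)| / κ := by
    intro n
    have := key (b n) (r n) (hbound n)
    rw [hfoc n] at this
    rw [le_div_iff₀ hκ]
    linarith [this]
  have htend : Filter.Tendsto (fun n => |h (r n)| / κ) Filter.atTop (nhds 0) := by
    have := (hhr.abs).div_const κ
    simpa using this
  exact squeeze_zero (fun n => abs_nonneg _) hle htend
end

section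
/- Let D : ℝ × ℝ → ℝ be twice continuously differentiable with ∂₂∂₁D(r,b) < 0 for all (r,b), and suppose that for every r the map b ↦ ∂₁D(r,b) is surjective onto ℝ. Let k : ℝ → ℝ be continuously differentiable. Then there is a unique function b* : ℝ → ℝ satisfying ∂₁D(r, b*(r)) = k(r) for all r; b* is differentiable with (b*)'(r) = (∂₁∂₁D(r,b*(r)) − k'(r)) / (−∂₂∂₁D(r,b*(r))) for every r; in particular, if ∂₁∂₁D(r,b*(r)) − k'(r) > 0 for all r, then (b*)'(r) > 0 for all r. -/
/-!
With `F r b = ∂₁D(r, b) - k(r)`, the graph of `b*` is the zero set of `F`. Single crossing makes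
each `F r` strictly decreasing, which gives uniqueness and, as `F r b` is continuous in `r`,
continuity of `b*`. For the derivative, two mean value theorems give
`∂_b F(r, ξ) (b*(r) - b*(r₀)) + ∂_r F(η, b*(r₀)) (r - r₀) = 0` with `ξ` between `b*(r₀)` and
`b*(r)` and `η` between `r₀` and `r`; continuity of `b*` and of the partials lets `r → r₀`.
-/

open Filter Set Topology

theorem exists_mem_uIcc_sub_eq_mul_sub {g g' : ℝ → ℝ} (hg : ∀ x, HasDerivAt g (g' x) x)
    (a b : ℝ) : ∃ c ∈ uIcc a b, g b - g a = g' c * (b - a) := by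
  wlog hab : a < b generalizing a b
  · rcases (not_lt.1 hab).eq_or_lt with rfl | hba
    · exact ⟨b, left_mem_uIcc, by ring⟩
    · obtain ⟨c, hc, hcg⟩ := this b a hba
      exact ⟨c, uIcc_comm a b ▸ hc, by linear_combination -hcg⟩
  obtain ⟨c, hc, hcg⟩ := exists_hasDerivAt_eq_slope g g' hab
    (fun x _ => (hg x).continuousAt.continuousWithinAt) (fun x _ => hg x)
  refine ⟨c, Icc_subset_uIcc (Ioo_subset_Icc_self hc), ?_⟩
  rw [hcg, div_mul_cancel₀ _ (sub_ne_zero.2 hab.ne')]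

theorem Filter.Tendsto.of_mem_uIcc {α ι : Type*} [LinearOrder α] [TopologicalSpace α]
    [OrderTopology α] {l : Filter ι} {a b c : ι → α} {y : α}
    (ha : Tendsto a l (𝓝 y)) (hb : Tendsto b l (𝓝 y)) (hc : ∀ i, c i ∈ uIcc (a i) (b i)) :
    Tendsto c l (𝓝 y) := by
  refine tendsto_of_tendsto_of_tendsto_of_le_of_le (g := fun i => min (a i) (b i))
    (h := fun i => max (a i) (b i)) ?_ ?_ (fun i => (hc i).1) (fun i => (hc i).2)
  · simpa using ha.min hb
  · simpa using ha.max hb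

theorem continuousAt_of_strictAnti_of_eq_zero {X : Type*} [TopologicalSpace X]
    {F : X → ℝ → ℝ} {φ : X → ℝ} {x₀ : X} (hanti : ∀ x, StrictAnti (F x))
    (hcont : ∀ b, ContinuousAt (fun x => F x b) x₀) (hφ : ∀ x, F x (φ x) = 0) :
    ContinuousAt φ x₀ := by
  refine tendsto_order.2 ⟨fun a ha => ?_, fun a ha => ?_⟩
  · have hpos : 0 < F x₀ a := hφ x₀ ▸ hanti x₀ ha
    filter_upwards [(hcont a).eventually_const_lt hpos] with x hx
    exact (hanti x).lt_iff_gt.1 (hφ x ▸ hx)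
  · have hneg : F x₀ a < 0 := hφ x₀ ▸ hanti x₀ ha
    filter_upwards [(hcont a).eventually_lt_const hneg] with x hx
    exact (hanti x).lt_iff_gt.1 (hφ x ▸ hx)

theorem hasDerivAt_of_eq_zero {F Fr Fb : ℝ → ℝ → ℝ} {φ : ℝ → ℝ} {r₀ : ℝ}
    (hFr : ∀ r, HasDerivAt (fun r' => F r' (φ r₀)) (Fr r (φ r₀)) r)
    (hFb : ∀ r b, HasDerivAt (F r) (Fb r b) b)
    (hFr_cont : ContinuousAt (fun r => Fr r (φ r₀)) r₀)
    (hFb_cont : ContinuousAt (Function.uncurry Fb) (r₀, φ r₀)) (hFb_ne : Fb r₀ (φ r₀) ≠ 0)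
    (hφ : ∀ r, F r (φ r) = 0) (hφ_cont : ContinuousAt φ r₀) :
    HasDerivAt φ (-Fr r₀ (φ r₀) / Fb r₀ (φ r₀)) r₀ := by
  choose ξ hξ hξ_eq using fun r => exists_mem_uIcc_sub_eq_mul_sub (hFb r) (φ r₀) (φ r)
  choose η hη hη_eq using exists_mem_uIcc_sub_eq_mul_sub hFr r₀
  have hlin : ∀ r, Fb r (ξ r) * (φ r - φ r₀) = -Fr (η r) (φ r₀) * (r - r₀) := fun r => by
    linear_combination (hξ_eq r).symm - (hη_eq r) - hφ r₀ + hφ r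
  have hη_lim : Tendsto η (𝓝 r₀) (𝓝 r₀) := tendsto_const_nhds.of_mem_uIcc tendsto_id hη
  have hξ_lim : Tendsto ξ (𝓝 r₀) (𝓝 (φ r₀)) := tendsto_const_nhds.of_mem_uIcc hφ_cont hξ
  have hFb_lim : Tendsto (fun r => Fb r (ξ r)) (𝓝 r₀) (𝓝 (Fb r₀ (φ r₀))) :=
    hFb_cont.tendsto.comp (tendsto_id.prodMk_nhds hξ_lim)
  have hquot : Tendsto (fun r => -Fr (η r) (φ r₀) / Fb r (ξ r)) (𝓝 r₀)
      (𝓝 (-Fr r₀ (φ r₀) / Fb r₀ (φ r₀))) :=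
    ((hFr_cont.tendsto.comp hη_lim).neg).div hFb_lim hFb_ne
  rw [hasDerivAt_iff_tendsto_slope]
  refine (hquot.mono_left nhdsWithin_le_nhds).congr' ?_
  filter_upwards [self_mem_nhdsWithin, nhdsWithin_le_nhds (hFb_lim.eventually_ne hFb_ne)]
    with r hr hne
  rw [slope_def_field, eq_div_iff (sub_ne_zero.2 hr), div_mul_eq_mul_div, div_eq_iff hne, ← hlin]
  ring

theorem inverse_anchor_map_general
    (D₁ D₁₁ D₁₂ : ℝ → ℝ → ℝ) (k k' : ℝ → ℝ)
    (hD₁₁ : ∀ r b, HasDerivAt (fun r' => D₁ r' b) (D₁₁ r b) r)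
    (hD₁₂ : ∀ r b, HasDerivAt (fun b' => D₁ r b') (D₁₂ r b) b)
    (hD₁cont : Continuous fun p : ℝ × ℝ => D₁ p.1 p.2)
    (hD₁₁cont : Continuous fun p : ℝ × ℝ => D₁₁ p.1 p.2)
    (hD₁₂cont : Continuous fun p : ℝ × ℝ => D₁₂ p.1 p.2)
    (hsc : ∀ r b, D₁₂ r b < 0)
    (hsurj : ∀ r, Function.Surjective fun b => D₁ r b)
    (hk : ∀ r, HasDerivAt k (k' r) r)
    (hk'cont : Continuous k') :
    ∃ bs : ℝ → ℝ,
      (∀ r, D₁ r (bs r) = k r) ∧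
      (∀ bs' : ℝ → ℝ, (∀ r, D₁ r (bs' r) = k r) → bs' = bs) ∧
      (∀ r, HasDerivAt bs
        ((D₁₁ r (bs r) - k' r) / (-(D₁₂ r (bs r)))) r) ∧
      ((∀ r, 0 < D₁₁ r (bs r) - k' r) →
        ∀ r, 0 < (D₁₁ r (bs r) - k' r) / (-(D₁₂ r (bs r)))) := by
  choose bs hbs using fun r => hsurj r (k r)
  have hzero : ∀ r, D₁ r (bs r) - k r = 0 := fun r => sub_eq_zero.2 (hbs r)
  have hanti : ∀ r, StrictAnti fun b => D₁ r b - k r := fun r =>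
    strictAnti_of_hasDerivAt_neg (fun b => (hD₁₂ r b).sub_const (k r)) (hsc r)
  have hk_cont : Continuous k := continuous_iff_continuousAt.2 fun r => (hk r).continuousAt
  have hbs_cont : ∀ r, ContinuousAt bs r := fun r =>
    continuousAt_of_strictAnti_of_eq_zero hanti
      (fun b => ((hD₁cont.uncurry_right b).sub hk_cont).continuousAt) hzero
  refine ⟨bs, hbs, fun bs' hbs' => funext fun r => (hanti r).injective ?_, fun r => ?_,
    fun hpos r => div_pos (hpos r) (neg_pos.2 (hsc r (bs r)))⟩
  · simp only [hbs', hbs, sub_self]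
  · rw [div_neg, ← neg_div]
    exact hasDerivAt_of_eq_zero (F := fun r b => D₁ r b - k r) (Fr := fun r b => D₁₁ r b - k' r)
      (fun r' => (hD₁₁ r' (bs r)).sub (hk r')) (fun r' b => (hD₁₂ r' b).sub_const (k r'))
      ((hD₁₁cont.uncurry_right (bs r)).sub hk'cont).continuousAt
      hD₁₂cont.continuousAt (hsc r (bs r)).ne hzero (hbs_cont r)

/-- The inverse-anchor map of Theorem 3.2: under single crossing
`∂₂∂₁D < 0` and surjectivity of `b ↦ ∂₁D(r,b)`, there is a unique map
`b*` solving the sender first-order condition `∂₁D(r, b*(r)) = k(r)`;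
it is differentiable with the stated derivative, which is positive whenever
the sender's strict second-order condition `∂₁∂₁D − k' > 0` holds. -/
theorem inverse_anchor_map
    (D D₁ D₁₁ D₁₂ : ℝ → ℝ → ℝ) (k k' : ℝ → ℝ)
    (hD₁ : ∀ r b, HasDerivAt (fun r' => D r' b) (D₁ r b) r)
    (hD₁₁ : ∀ r b, HasDerivAt (fun r' => D₁ r' b) (D₁₁ r b) r)
    (hD₁₂ : ∀ r b, HasDerivAt (fun b' => D₁ r b') (D₁₂ r b) b)
    (hD₁cont : Continuous fun p : ℝ × ℝ => D₁ p.1 p.2)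
    (hD₁₁cont : Continuous fun p : ℝ × ℝ => D₁₁ p.1 p.2)
    (hD₁₂cont : Continuous fun p : ℝ × ℝ => D₁₂ p.1 p.2)
    (hsc : ∀ r b, D₁₂ r b < 0)
    (hsurj : ∀ r, Function.Surjective fun b => D₁ r b)
    (hk : ∀ r, HasDerivAt k (k' r) r)
    (hk'cont : Continuous k') :
    ∃ bs : ℝ → ℝ,
      (∀ r, D₁ r (bs r) = k r) ∧
      (∀ bs' : ℝ → ℝ, (∀ r, D₁ r (bs' r) = k r) → bs' = bs) ∧
      (∀ r, HasDerivAt bs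
        ((D₁₁ r (bs r) - k' r) / (-(D₁₂ r (bs r)))) r) ∧
      ((∀ r, 0 < D₁₁ r (bs r) - k' r) →
        ∀ r, 0 < (D₁₁ r (bs r) - k' r) / (-(D₁₂ r (bs r)))) :=
  inverse_anchor_map_general D₁ D₁₁ D₁₂ k k' hD₁₁ hD₁₂ hD₁cont hD₁₁cont hD₁₂cont hsc hsurj hk
    hk'cont
end

section
/- Let Θ = [θ̲, θ̄] with θ̲ < θ̄, let c > 0, let I ⊆ ℝ be open, and let a : I → ℝ be twice continuously differentiable with a'(r) > 0 on I. Let ψ : ℝ → ℝ be continuously differentiable, let u₁, u₁₁ : ℝ × Θ → ℝ be continuous (the first and second partial derivatives of the sender's action payoff U^S in the action, evaluated at (a,θ)), let v : ℝ × Θ → ℝ be continuous (the receiver's marginal payoff U^R₁), let f : Θ → ℝ and q : ℝ × Θ → ℝ be continuous. For r ∈ I, θ ∈ Θ, p ∈ ℝ define s(r,θ,p) = u₁(a(r),θ)·p/c and b(r,θ,p) = r − ψ(s(r,θ,p)); define 𝓐(r) = ∫_Θ v(a(r),θ)·f(θ)·q(b(r,θ,a'(r)),θ)·ψ'(s(r,θ,a'(r)))·u₁(a(r),θ)/c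 dθ and 𝓑(r) = ∫_Θ v(a(r),θ)·f(θ)·q(b(r,θ,a'(r)),θ)·[1 − ψ'(s(r,θ,a'(r)))·u₁₁(a(r),θ)·(a'(r))²/c] dθ. Suppose u₁ is continuously differentiable in its first argument with derivative u₁₁. Then for each fixed θ the map r ↦ b(r,θ,a'(r)) is differentiable with derivative ∂_r b = 1 − (ψ'(s(r,θ,a'(r)))/c)·[u₁₁(a(r),θ)·(a'(r))² + u₁(a(r),θ)·a''(r)], and for every r ∈ I the Bayes equation ∫_Θ v(a(r),θ)·f(θ)·q(b(r,θ,a'(r)),θ)·∂_r b(r,θ,a'(r)) dθ = 0 holds if and only if 𝓐(r)·a''(r) = 𝓑(r). -/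
open MeasureTheory

/-!
The anchor map `r ↦ r - ψ(u₁(a r, θ) a'(r) / c)` is differentiated by the chain and product
rules. Its derivative is affine in `a''(r)`, so the Bayes integrand splits pointwise as
`G θ - H θ · a''(r)` with `G`, `H` the integrands of `𝓑` and `𝓐`; both are continuous on the
compact `Θ`, hence integrable, and the Bayes equation `∫ G - (∫ H) a'' = 0` is `𝓐 a'' = 𝓑`.
-/

theorem hasDerivAt_sub_comp_mul_div {a a' ψ u : ℝ → ℝ} {a'' u' ψ' c r : ℝ}
    (ha : HasDerivAt a (a' r) r) (ha' : HasDerivAt a' a'' r) (hu : HasDerivAt u u' (a r))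
    (hψ : HasDerivAt ψ ψ' (u (a r) * a' r / c)) :
    HasDerivAt (fun r' => r' - ψ (u (a r') * a' r' / c))
      (1 - ψ' / c * (u' * a' r ^ 2 + u (a r) * a'')) r := by
  have hs : HasDerivAt (fun r' => u (a r') * a' r' / c) ((u' * a' r * a' r + u (a r) * a'') / c) r :=
    ((hu.comp r ha).mul ha').div_const c
  exact ((hasDerivAt_id r).sub (hψ.comp r hs)).congr_deriv (by ring)

theorem integral_eq_zero_iff_of_eq_sub_mul {α : Type*} [MeasurableSpace α] {μ : Measure α}
    {F g h : α → ℝ} {k : ℝ} (hg : Integrable g μ) (hh : Integrable h μ)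
    (hF : ∀ x, F x = g x - h x * k) :
    ∫ x, F x ∂μ = 0 ↔ (∫ x, h x ∂μ) * k = ∫ x, g x ∂μ := by
  rw [integral_congr_ae (.of_forall hF), integral_sub hg (hh.mul_const k), integral_mul_const,
    sub_eq_zero, eq_comm]

theorem bayes_equation_equiv_ode_general
    (θl θu : ℝ) (c : ℝ)
    (I : Set ℝ)
    (a a' a'' : ℝ → ℝ)
    (ha' : ∀ r ∈ I, HasDerivAt a (a' r) r)
    (ha'' : ∀ r ∈ I, HasDerivAt a' (a'' r) r)
    (ψ ψ' : ℝ → ℝ)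
    (hψ : ∀ s, HasDerivAt ψ (ψ' s) s)
    (hψ'cont : Continuous ψ')
    (u₁ u₁₁ : ℝ → ℝ → ℝ)
    (hu₁cont : Continuous fun p : ℝ × ℝ => u₁ p.1 p.2)
    (hu₁₁cont : Continuous fun p : ℝ × ℝ => u₁₁ p.1 p.2)
    (hu₁deriv : ∀ x θ, HasDerivAt (fun y => u₁ y θ) (u₁₁ x θ) x)
    (v : ℝ → ℝ → ℝ) (hv : Continuous fun p : ℝ × ℝ => v p.1 p.2)
    (f : ℝ → ℝ) (hf : Continuous f)
    (q : ℝ → ℝ → ℝ) (hq : Continuous fun p : ℝ × ℝ => q p.1 p.2) :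
    -- the rationalizing-anchor derivative
    (∀ θ ∈ Set.Icc θl θu, ∀ r ∈ I,
      HasDerivAt
        (fun r' => r' - ψ (u₁ (a r') θ * a' r' / c))
        (1 - ψ' (u₁ (a r) θ * a' r / c) / c *
          (u₁₁ (a r) θ * (a' r) ^ 2 + u₁ (a r) θ * a'' r)) r) ∧
    -- equivalence of the Bayes equation with the ODE 𝓐·a'' = 𝓑
    (∀ r ∈ I,
      ((∫ θ in Set.Icc θl θu,
          v (a r) θ * f θ * q (r - ψ (u₁ (a r) θ * a' r / c)) θ *
            (1 - ψ' (u₁ (a r) θ * a' r / c) / c *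
              (u₁₁ (a r) θ * (a' r) ^ 2 + u₁ (a r) θ * a'' r))) = 0
        ↔
      (∫ θ in Set.Icc θl θu,
          v (a r) θ * f θ * q (r - ψ (u₁ (a r) θ * a' r / c)) θ *
            ψ' (u₁ (a r) θ * a' r / c) * u₁ (a r) θ / c) * a'' r
        =
      (∫ θ in Set.Icc θl θu,
          v (a r) θ * f θ * q (r - ψ (u₁ (a r) θ * a' r / c)) θ *
            (1 - ψ' (u₁ (a r) θ * a' r / c) * u₁₁ (a r) θ *
              (a' r) ^ 2 / c)))) := by
  refine ⟨fun θ _ r hr => hasDerivAt_sub_comp_mul_div (ha' r hr) (ha'' r hr)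
    (hu₁deriv (a r) θ) (hψ _), fun r _ => ?_⟩
  have hψcont : Continuous ψ := Differentiable.continuous fun s => (hψ s).differentiableAt
  have hv' := hv.uncurry_left (a r)
  have hu₁' := hu₁cont.uncurry_left (a r)
  have hu₁₁' := hu₁₁cont.uncurry_left (a r)
  have hq' : Continuous fun θ => q (r - ψ (u₁ (a r) θ * a' r / c)) θ :=
    hq.comp ((continuous_const.sub (hψcont.comp ((hu₁'.mul_const _).div_const _))).prodMk
      continuous_id)
  refine integral_eq_zero_iff_of_eq_sub_mul (Continuous.integrableOn_Icc ?_)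
    (Continuous.integrableOn_Icc ?_) (fun θ => by ring) <;> fun_prop

/-- Theorem 4.1: in the additive-anchor model, the exact Bayes equation of a
regular equilibrium on a smooth region `I` is equivalent to the second-order
ODE `𝓐(r)·a''(r) = 𝓑(r)`, and the rationalizing anchor map
`r ↦ b(r,θ,a'(r))` has the stated derivative. -/
theorem bayes_equation_equiv_ode
    (θl θu : ℝ) (hθ : θl < θu) (c : ℝ) (hc : 0 < c)
    (I : Set ℝ) (hI : IsOpen I)
    (a a' a'' : ℝ → ℝ)
    (ha' : ∀ r ∈ I, HasDerivAt a (a' r) r)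
    (ha'' : ∀ r ∈ I, HasDerivAt a' (a'' r) r)
    (ha'pos : ∀ r ∈ I, 0 < a' r)
    (ψ ψ' : ℝ → ℝ)
    (hψ : ∀ s, HasDerivAt ψ (ψ' s) s)
    (hψ'cont : Continuous ψ')
    (u₁ u₁₁ : ℝ → ℝ → ℝ)
    (hu₁cont : Continuous fun p : ℝ × ℝ => u₁ p.1 p.2)
    (hu₁₁cont : Continuous fun p : ℝ × ℝ => u₁₁ p.1 p.2)
    (hu₁deriv : ∀ x θ, HasDerivAt (fun y => u₁ y θ) (u₁₁ x θ) x)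
    (v : ℝ → ℝ → ℝ) (hv : Continuous fun p : ℝ × ℝ => v p.1 p.2)
    (f : ℝ → ℝ) (hf : Continuous f)
    (q : ℝ → ℝ → ℝ) (hq : Continuous fun p : ℝ × ℝ => q p.1 p.2) :
    -- the rationalizing-anchor derivative
    (∀ θ ∈ Set.Icc θl θu, ∀ r ∈ I,
      HasDerivAt
        (fun r' => r' - ψ (u₁ (a r') θ * a' r' / c))
        (1 - ψ' (u₁ (a r) θ * a' r / c) / c *
          (u₁₁ (a r) θ * (a' r) ^ 2 + u₁ (a r) θ * a'' r)) r) ∧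
    -- equivalence of the Bayes equation with the ODE 𝓐·a'' = 𝓑
    (∀ r ∈ I,
      ((∫ θ in Set.Icc θl θu,
          v (a r) θ * f θ * q (r - ψ (u₁ (a r) θ * a' r / c)) θ *
            (1 - ψ' (u₁ (a r) θ * a' r / c) / c *
              (u₁₁ (a r) θ * (a' r) ^ 2 + u₁ (a r) θ * a'' r))) = 0
        ↔
      (∫ θ in Set.Icc θl θu,
          v (a r) θ * f θ * q (r - ψ (u₁ (a r) θ * a' r / c)) θ *
            ψ' (u₁ (a r) θ * a' r / c) * u₁ (a r) θ / c) * a'' r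
        =
      (∫ θ in Set.Icc θl θu,
          v (a r) θ * f θ * q (r - ψ (u₁ (a r) θ * a' r / c)) θ *
            (1 - ψ' (u₁ (a r) θ * a' r / c) * u₁₁ (a r) θ *
              (a' r) ^ 2 / c)))) :=
  bayes_equation_equiv_ode_general θl θu c I a a' a'' ha' ha'' ψ ψ' hψ hψ'cont u₁ u₁₁ hu₁cont
    hu₁₁cont hu₁deriv v hv f hf q hq
end

section
/- Fix reals β > 0, c > 0, σ > 0, σθ > 0 and define F(α) = β·σθ²·α² + (c·σ² + c·β²·σθ² − σθ²)·α − c·β·σθ². Then there exists a unique α > 0 with F(α) = 0, and this root satisfies α < 1/β. -/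
set_option maxHeartbeats 1000000


/-- Theorem 4.2 (root of the sensitivity quadratic): for `β > 0`, the
quadratic `F(α) = βσθ²α² + (cσ² + cβ²σθ² − σθ²)α − cβσθ²` has a unique
positive root, and this root lies below `1/β`. -/
theorem unique_positive_sensitivity_root
    (β c σ σθ : ℝ) (hβ : 0 < β) (hc : 0 < c) (hσ : 0 < σ) (hσθ : 0 < σθ) :
    ∃ α : ℝ,
      (0 < α ∧
        β * σθ ^ 2 * α ^ 2 + (c * σ ^ 2 + c * β ^ 2 * σθ ^ 2 - σθ ^ 2) * α
          - c * β * σθ ^ 2 = 0 ∧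
        α < 1 / β) ∧
      ∀ α' : ℝ, 0 < α' →
        β * σθ ^ 2 * α' ^ 2 + (c * σ ^ 2 + c * β ^ 2 * σθ ^ 2 - σθ ^ 2) * α'
          - c * β * σθ ^ 2 = 0 → α' = α := by
  set A := β * σθ ^ 2 with hAdef
  set B := c * σ ^ 2 + c * β ^ 2 * σθ ^ 2 - σθ ^ 2 with hBdef
  set C := c * β * σθ ^ 2 with hCdef
  have hA : 0 < A := by positivity
  have hC : 0 < C := by positivity
  have hD : 0 < B ^ 2 + 4 * A * C := by nlinarith [sq_nonneg B, mul_pos hA hC]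
  set s := Real.sqrt (B ^ 2 + 4 * A * C) with hsdef
  have hs2 : s ^ 2 = B ^ 2 + 4 * A * C := Real.sq_sqrt hD.le
  have hs0 : 0 ≤ s := Real.sqrt_nonneg _
  have hsB : B < s := by nlinarith [mul_pos hA hC]
  set α := (s - B) / (2 * A) with hαdef
  have hα : 0 < α := div_pos (by linarith) (by linarith)
  have hfα : A * α ^ 2 + B * α - C = 0 := by
    rw [hαdef]
    field_simp
    nlinarith [hs2]
  -- any positive root x satisfies 0 < A*x + B
  have hAB : ∀ x : ℝ, 0 < x → A * x ^ 2 + B * x - C = 0 → 0 < A * x + B := by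
    intro x hx hfx
    by_contra h
    push_neg at h
    nlinarith [mul_nonpos_of_nonneg_of_nonpos hx.le h]
  have hABα : 0 < A * α + B := hAB α hα hfα
  -- the bound α < 1/β
  have hb : 0 < 1 / β := by positivity
  have hfb : A * (1 / β) ^ 2 + B * (1 / β) - C = c * σ ^ 2 / β := by
    rw [hAdef, hBdef, hCdef]
    field_simp
    ring
  have hfactor : 0 < A * (1 / β + α) + B := by nlinarith [mul_pos hA hb]
  have hprod : (1 / β - α) * (A * (1 / β + α) + B) = c * σ ^ 2 / β := by
    linear_combination hfb - hfα
  have hbound : α < 1 / β := by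
    by_contra h
    push_neg at h
    have h1 : (1 / β - α) * (A * (1 / β + α) + B) ≤ 0 :=
      mul_nonpos_of_nonpos_of_nonneg (by linarith) hfactor.le
    have h2 : 0 < c * σ ^ 2 / β := by positivity
    linarith [hprod ▸ h1]
  refine ⟨α, ⟨hα, hfα, hbound⟩, ?_⟩
  intro α' hα' hfα'
  have hABα' : 0 < A * α' + B := hAB α' hα' hfα'
  have hfac : 0 < A * (α' + α) + B := by nlinarith [mul_pos hA hα']
  have hz : (α' - α) * (A * (α' + α) + B) = 0 := by linear_combination hfα' - hfα
  rcases mul_eq_zero.mp hz with h | h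
  · linarith
  · linarith
end

section
/- Fix reals β > 0, c > 0, σ > 0, σθ > 0 and define F(α) = β·σθ²·α² + (c·σ² + c·β²·σθ² − σθ²)·α − c·β·σθ². Let α > 0 satisfy F(α) = 0, and set K₁ = (c·β + α)/(c + α²) and K₂ = c·σ/(c + α²). Then σθ² − (K₁·σθ²)²/(K₁²·σθ² + K₂²) = c·(1 − β·α)·σθ²/(c + α²). -/
/-!
For a report `r = K₁ θ + K₂ x`, the residual variance is `σθ² K₂² / (K₁² σθ² + K₂²)`,
which is unchanged when both gains are divided by the common factor `c + α²`.
The root condition `F(α) = 0` says exactly `c σ² α = (1 - β α)(c β + α) σθ²`; multiplying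
the denominator `(c β + α)² σθ² + (c σ)²` by `1 - β α` and substituting this turns it into
`c σ² (c + α²)`, which gives the closed form.
-/

/-- The receiver's residual variance `Var(θ | r)` for a report `r = k₁ θ + k₂ x`, where
`Var θ = v`, `Var x = 1` and `θ, x` are independent. -/
def residualVariance {K : Type*} [Field K] (v k₁ k₂ : K) : K :=
  v - (k₁ * v) ^ 2 / (k₁ ^ 2 * v + k₂ ^ 2)

section ResidualVariance

variable {K : Type*} [Field K] {v k₁ k₂ : K}

theorem residualVariance_eq (h : k₁ ^ 2 * v + k₂ ^ 2 ≠ 0) :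
    residualVariance v k₁ k₂ = v * k₂ ^ 2 / (k₁ ^ 2 * v + k₂ ^ 2) := by
  rw [residualVariance, eq_div_iff h, sub_mul, div_mul_cancel₀ _ h]
  ring

theorem residualVariance_div_div {d : K} (hd : d ≠ 0) :
    residualVariance v (k₁ / d) (k₂ / d) = residualVariance v k₁ k₂ := by
  have hd2 : d ^ 2 ≠ 0 := pow_ne_zero 2 hd
  have hscale : (k₁ / d) ^ 2 * v + (k₂ / d) ^ 2 = (k₁ ^ 2 * v + k₂ ^ 2) / d ^ 2 := by ring
  rw [residualVariance, residualVariance, hscale, div_mul_eq_mul_div, div_pow,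
    div_div_div_cancel_right₀ hd2]

end ResidualVariance

section Root

variable {R : Type*} [CommRing R] {β c σ σθ α : R}

theorem root_iff :
    β * σθ ^ 2 * α ^ 2 + (c * σ ^ 2 + c * β ^ 2 * σθ ^ 2 - σθ ^ 2) * α - c * β * σθ ^ 2 = 0 ↔
      c * σ ^ 2 * α = (1 - β * α) * (c * β + α) * σθ ^ 2 := by
  constructor <;> intro h <;> linear_combination h

theorem one_sub_mul_mul_denominator_of_root
    (h : c * σ ^ 2 * α = (1 - β * α) * (c * β + α) * σθ ^ 2) :
    (1 - β * α) * ((c * β + α) ^ 2 * σθ ^ 2 + (c * σ) ^ 2) = c * σ ^ 2 * (c + α ^ 2) := by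
  linear_combination (-(c * β + α)) * h

end Root

theorem posterior_variance_formula_general
    (β c σ σθ α : ℝ) (hc : 0 < c) (hσ : 0 < σ)
    (hroot : β * σθ ^ 2 * α ^ 2 + (c * σ ^ 2 + c * β ^ 2 * σθ ^ 2 - σθ ^ 2) * α
      - c * β * σθ ^ 2 = 0) :
    σθ ^ 2 -
        ((c * β + α) / (c + α ^ 2) * σθ ^ 2) ^ 2 /
          (((c * β + α) / (c + α ^ 2)) ^ 2 * σθ ^ 2 +
            (c * σ / (c + α ^ 2)) ^ 2) =
      c * (1 - β * α) * σθ ^ 2 / (c + α ^ 2) := by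
  have hD : (0 : ℝ) < c + α ^ 2 := by positivity
  have hE : (0 : ℝ) < (c * β + α) ^ 2 * σθ ^ 2 + (c * σ) ^ 2 := by positivity
  have hden := one_sub_mul_mul_denominator_of_root (root_iff.mp hroot)
  calc _ = residualVariance (σθ ^ 2) ((c * β + α) / (c + α ^ 2)) (c * σ / (c + α ^ 2)) := rfl
    _ = residualVariance (σθ ^ 2) (c * β + α) (c * σ) := residualVariance_div_div hD.ne'
    _ = σθ ^ 2 * (c * σ) ^ 2 / ((c * β + α) ^ 2 * σθ ^ 2 + (c * σ) ^ 2) :=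
      residualVariance_eq hE.ne'
    _ = _ := by
      rw [div_eq_div_iff hE.ne' hD.ne']
      linear_combination (-(c * σθ ^ 2)) * hden

/-- The posterior-variance formula (equation (9)) in the Gaussian-quadratic
benchmark: with `K₁ = (cβ + α)/(c + α²)` and `K₂ = cσ/(c + α²)`, the residual
posterior variance `σθ² − (K₁σθ²)²/(K₁²σθ² + K₂²)` equals
`c(1 − βα)σθ²/(c + α²)`. -/
theorem posterior_variance_formula
    (β c σ σθ α : ℝ) (hβ : 0 < β) (hc : 0 < c) (hσ : 0 < σ) (hσθ : 0 < σθ)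
    (hα : 0 < α)
    (hroot : β * σθ ^ 2 * α ^ 2 + (c * σ ^ 2 + c * β ^ 2 * σθ ^ 2 - σθ ^ 2) * α
      - c * β * σθ ^ 2 = 0) :
    σθ ^ 2 -
        ((c * β + α) / (c + α ^ 2) * σθ ^ 2) ^ 2 /
          (((c * β + α) / (c + α ^ 2)) ^ 2 * σθ ^ 2 +
            (c * σ / (c + α ^ 2)) ^ 2) =
      c * (1 - β * α) * σθ ^ 2 / (c + α ^ 2) :=
  posterior_variance_formula_general β c σ σθ α hc hσ hroot
end

section
/- Fix reals β > 0, σ > 0, σθ > 0, and for each c > 0 let α(c) denote the unique positive root of F_c(α) = β·σθ²·α² + (c·σ² + c·β²·σθ² − σθ²)·α − c·β·σθ². Then c ↦ α(c) is strictly decreasing on (0,∞). Likewise, fixing β > 0, c > 0, σθ > 0 and letting α(σ) denote the unique positive root of the same quadratic viewed as a function of σ > 0, the map σ ↦ α(σ) is strictly decreasing on (0,∞). -/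
/-- Corollary 4.2(i): the equilibrium sensitivity (the unique positive root of
the quadratic) is strictly decreasing in the reporting cost `c` and in the
anchor noise `σ`. -/
theorem sensitivity_decreasing_in_cost_and_noise
    (β σθ : ℝ) (hβ : 0 < β) (hσθ : 0 < σθ) :
    (∀ σ : ℝ, 0 < σ → ∀ c₁ c₂ α₁ α₂ : ℝ,
      0 < c₁ → c₁ < c₂ → 0 < α₁ → 0 < α₂ →
      β * σθ ^ 2 * α₁ ^ 2 + (c₁ * σ ^ 2 + c₁ * β ^ 2 * σθ ^ 2 - σθ ^ 2) * α₁
        - c₁ * β * σθ ^ 2 = 0 →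
      β * σθ ^ 2 * α₂ ^ 2 + (c₂ * σ ^ 2 + c₂ * β ^ 2 * σθ ^ 2 - σθ ^ 2) * α₂
        - c₂ * β * σθ ^ 2 = 0 →
      α₂ < α₁) ∧
    (∀ c : ℝ, 0 < c → ∀ σ₁ σ₂ α₁ α₂ : ℝ,
      0 < σ₁ → σ₁ < σ₂ → 0 < α₁ → 0 < α₂ →
      β * σθ ^ 2 * α₁ ^ 2 + (c * σ₁ ^ 2 + c * β ^ 2 * σθ ^ 2 - σθ ^ 2) * α₁
        - c * β * σθ ^ 2 = 0 →
      β * σθ ^ 2 * α₂ ^ 2 + (c * σ₂ ^ 2 + c * β ^ 2 * σθ ^ 2 - σθ ^ 2) * α₂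
        - c * β * σθ ^ 2 = 0 →
      α₂ < α₁) := by
  constructor
  · intro σ hσ c₁ c₂ α₁ α₂ hc₁ hc₁₂ hα₁ hα₂ e₁ e₂
    -- Step 1: β * α₁ < 1
    have hβα : β * α₁ < 1 := by
      by_contra h
      push_neg at h
      nlinarith [mul_pos hc₁ (mul_pos hσ hσ), mul_pos hσθ hσθ, mul_pos hc₁ hα₁,
        mul_pos hβ hσθ, mul_nonneg (mul_nonneg hσθ.le hσθ.le) (mul_nonneg hα₁.le (sub_nonneg.mpr h)),
        mul_nonneg (mul_nonneg (mul_pos hc₁ hβ).le (mul_pos hσθ hσθ).le) (sub_nonneg.mpr h)]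
    -- Step 2: denominator positive
    have hD : 0 < α₁ * (σ ^ 2 + β ^ 2 * σθ ^ 2) - β * σθ ^ 2 := by
      have hnum : 0 < σθ ^ 2 * α₁ * (1 - β * α₁) :=
        mul_pos (mul_pos (by positivity) hα₁) (by linarith)
      have hid : c₁ * (α₁ * (σ ^ 2 + β ^ 2 * σθ ^ 2) - β * σθ ^ 2)
          = σθ ^ 2 * α₁ * (1 - β * α₁) := by linear_combination e₁
      by_contra h
      push_neg at h
      nlinarith [mul_nonpos_of_nonneg_of_nonpos hc₁.le h]
    -- Step 3: key identity
    have key : (α₁ - α₂) * (β * σθ ^ 2 * α₁ * α₂ + c₂ * β * σθ ^ 2)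
        = α₂ * ((c₂ - c₁) * (α₁ * (σ ^ 2 + β ^ 2 * σθ ^ 2) - β * σθ ^ 2)) := by
      linear_combination α₂ * e₁ - α₁ * e₂
    have hc₂ : 0 < c₂ := lt_trans hc₁ hc₁₂
    have hP : 0 < β * σθ ^ 2 * α₁ * α₂ + c₂ * β * σθ ^ 2 := by positivity
    have hQ : 0 < α₂ * ((c₂ - c₁) * (α₁ * (σ ^ 2 + β ^ 2 * σθ ^ 2) - β * σθ ^ 2)) := by
      exact mul_pos hα₂ (mul_pos (by linarith) hD)
    nlinarith [key, hP, hQ]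
  · intro c hc σ₁ σ₂ α₁ α₂ hσ₁ hσ₁₂ hα₁ hα₂ e₁ e₂
    have key : (α₁ - α₂) * (β * σθ ^ 2 * α₁ * α₂ + c * β * σθ ^ 2)
        = c * α₁ * α₂ * (σ₂ ^ 2 - σ₁ ^ 2) := by
      linear_combination α₂ * e₁ - α₁ * e₂
    have hP : 0 < β * σθ ^ 2 * α₁ * α₂ + c * β * σθ ^ 2 := by positivity
    have hQ : 0 < c * α₁ * α₂ * (σ₂ ^ 2 - σ₁ ^ 2) := by
      exact mul_pos (mul_pos (mul_pos hc hα₁) hα₂) (by nlinarith)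
    nlinarith [key, hP, hQ]
end

section
/- Fix reals c > 0, σ > 0, σθ > 0, and for each β > 0 let α(β) denote the unique positive root of F_β(α) = β·σθ²·α² + (c·σ² + c·β²·σθ² − σθ²)·α − c·β·σθ². Then the map β ↦ β·α(β) is strictly increasing on (0,∞), and β·α(β) ∈ (0,1) for every β > 0. -/
private lemma aux_root (c σ σθ β α : ℝ) (hc : 0 < c) (hσ : 0 < σ) (hσθ : 0 < σθ)
    (hβ : 0 < β) (hα : 0 < α)
    (heq : β * σθ ^ 2 * α ^ 2 + (c * σ ^ 2 + c * β ^ 2 * σθ ^ 2 - σθ ^ 2) * α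
      - c * β * σθ ^ 2 = 0) :
    β * α < 1 ∧
    c * β ^ 2 * σθ ^ 2 * (1 - β * α) = β * α * (c * σ ^ 2 - σθ ^ 2 * (1 - β * α)) ∧
    0 < c * σ ^ 2 - σθ ^ 2 * (1 - β * α) := by
  have hid : c * β ^ 2 * σθ ^ 2 * (1 - β * α)
      = β * α * (c * σ ^ 2 - σθ ^ 2 * (1 - β * α)) := by
    linear_combination (-β) * heq
  have ht : 0 < β * α := mul_pos hβ hα
  have hs : 0 < σθ ^ 2 := by positivity
  have hσ2 : 0 < σ ^ 2 := by positivity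
  have hlt : β * α < 1 := by
    by_contra h
    push_neg at h
    have hβ2 : (0:ℝ) < β ^ 2 := by positivity
    nlinarith [hid, mul_pos ht (mul_pos hc hσ2),
      mul_nonneg ht.le (mul_nonneg hs.le (sub_nonneg.mpr h)),
      mul_nonneg (mul_nonneg (mul_pos hc hβ2).le hs.le) (sub_nonneg.mpr h)]
  have hβ2 : 0 < β ^ 2 := by positivity
  refine ⟨hlt, hid, ?_⟩
  nlinarith [mul_pos (mul_pos (mul_pos hc hβ2) hs) (sub_pos.mpr hlt)]

/-- Corollary 4.2(i): the transmitted composite `β·α(β)` is strictly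
increasing in the anchor informativeness `β`, and lies in `(0,1)`. -/
theorem transmitted_share_increasing_in_beta
    (c σ σθ : ℝ) (hc : 0 < c) (hσ : 0 < σ) (hσθ : 0 < σθ) :
    (∀ β₁ β₂ α₁ α₂ : ℝ,
      0 < β₁ → β₁ < β₂ → 0 < α₁ → 0 < α₂ →
      β₁ * σθ ^ 2 * α₁ ^ 2 + (c * σ ^ 2 + c * β₁ ^ 2 * σθ ^ 2 - σθ ^ 2) * α₁
        - c * β₁ * σθ ^ 2 = 0 →
      β₂ * σθ ^ 2 * α₂ ^ 2 + (c * σ ^ 2 + c * β₂ ^ 2 * σθ ^ 2 - σθ ^ 2) * α₂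
        - c * β₂ * σθ ^ 2 = 0 →
      β₁ * α₁ < β₂ * α₂) ∧
    (∀ β α : ℝ, 0 < β → 0 < α →
      β * σθ ^ 2 * α ^ 2 + (c * σ ^ 2 + c * β ^ 2 * σθ ^ 2 - σθ ^ 2) * α
        - c * β * σθ ^ 2 = 0 →
      0 < β * α ∧ β * α < 1) := by
  constructor
  · intro β₁ β₂ α₁ α₂ hβ₁ hβ12 hα₁ hα₂ heq₁ heq₂
    have hβ₂ : 0 < β₂ := hβ₁.trans hβ12
    obtain ⟨hlt₁, hid₁, hpos₁⟩ := aux_root c σ σθ β₁ α₁ hc hσ hσθ hβ₁ hα₁ heq₁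
    obtain ⟨hlt₂, hid₂, hpos₂⟩ := aux_root c σ σθ β₂ α₂ hc hσ hσθ hβ₂ hα₂ heq₂
    by_contra h
    push_neg at h
    -- h : β₂ * α₂ ≤ β₁ * α₁
    have ht₁ : 0 < β₁ * α₁ := mul_pos hβ₁ hα₁
    have ht₂ : 0 < β₂ * α₂ := mul_pos hβ₂ hα₂
    have hu₁ : 0 < 1 - β₁ * α₁ := sub_pos.mpr hlt₁
    have hu₂ : 0 < 1 - β₂ * α₂ := sub_pos.mpr hlt₂
    have hs : 0 < σθ ^ 2 := by positivity
    have hββ : β₁ ^ 2 < β₂ ^ 2 := by nlinarith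
    -- t₂ ≤ t₁ ⇒ u₁ ≤ u₂ ⇒ product inequality
    have key : β₂ * α₂ * (c * σ ^ 2 - σθ ^ 2 * (1 - β₂ * α₂)) * (1 - β₁ * α₁)
        ≤ β₁ * α₁ * (c * σ ^ 2 - σθ ^ 2 * (1 - β₁ * α₁)) * (1 - β₂ * α₂) := by
      nlinarith [mul_nonneg (mul_nonneg (sub_nonneg.mpr h) hpos₂.le) hu₁.le,
        mul_nonneg (mul_nonneg ht₁.le (mul_nonneg hs.le (sub_nonneg.mpr h))) hu₁.le,
        mul_nonneg (mul_nonneg ht₁.le hpos₁.le) (mul_nonneg hs.le (sub_nonneg.mpr h))]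
    rw [← hid₁, ← hid₂] at key
    nlinarith [mul_pos (mul_pos (mul_pos hc hs) hu₁) hu₂]
  · intro β α hβ hα heq
    obtain ⟨hlt, -, -⟩ := aux_root c σ σθ β α hc hσ hσθ hβ hα heq
    exact ⟨mul_pos hβ hα, hlt⟩
end

section
/- Fix reals β > 0, σ > 0, σθ > 0, and for each c > 0 let α(c) denote the unique positive root of F_c(α) = β·σθ²·α² + (c·σ² + c·β²·σθ² − σθ²)·α − c·β·σθ², and define V(c) = c·(1 − β·α(c))·σθ²/(c + α(c)²). Then c ↦ V(c) is strictly increasing on (0,∞). Likewise, for fixed β > 0, c > 0, σθ > 0, the analogous map σ ↦ V(σ) = c·(1 − β·α(σ))·σθ²/(c + α(σ)²) is strictly increasing on (0,∞). -/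
/-- Any positive root of the sensitivity quadratic satisfies `β·α < 1`. -/
lemma aux_root_lt_one (β σθ σ c α : ℝ) (hβ : 0 < β) (hσθ : 0 < σθ) (hσ : 0 < σ)
    (hc : 0 < c) (hα : 0 < α)
    (h : β * σθ ^ 2 * α ^ 2 + (c * σ ^ 2 + c * β ^ 2 * σθ ^ 2 - σθ ^ 2) * α
        - c * β * σθ ^ 2 = 0) : β * α < 1 := by
  by_contra h1
  push_neg at h1
  have h2 : (0:ℝ) ≤ σθ ^ 2 * α + c * β * σθ ^ 2 := by positivity
  nlinarith [mul_pos (mul_pos hc (mul_pos hσ hσ)) hα,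
    mul_nonneg (sub_nonneg.2 h1) h2]

/-- If `α₂` is a positive root of an upward quadratic with negative constant
term and the quadratic is positive at `α₁ > 0`, then `α₂ < α₁`. -/
lemma aux_root_order (A B C α₁ α₂ : ℝ) (hA : 0 < A) (hC : C < 0)
    (hα₁ : 0 < α₁) (hα₂ : 0 < α₂)
    (h2 : A * α₂ ^ 2 + B * α₂ + C = 0)
    (h1 : 0 < A * α₁ ^ 2 + B * α₁ + C) : α₂ < α₁ := by
  by_contra h
  push_neg at h
  nlinarith [mul_pos hα₂ h1, mul_pos (mul_pos hA hα₁) hα₂,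
    mul_le_mul_of_nonneg_left h (le_of_lt hα₁)]

/-- Closed form of the residual variance in terms of the root alone. -/
lemma aux_V_identity (β σθ σ c α : ℝ) (hσθ : 0 < σθ) (hσ : 0 < σ)
    (hc : 0 < c) (hα : 0 < α) (hβα : β * α < 1)
    (h : β * σθ ^ 2 * α ^ 2 + (c * σ ^ 2 + c * β ^ 2 * σθ ^ 2 - σθ ^ 2) * α
        - c * β * σθ ^ 2 = 0) :
    c * (1 - β * α) * σθ ^ 2 / (c + α ^ 2)
      = σθ ^ 4 * (1 - β * α) ^ 2 / (σθ ^ 2 * (1 - β * α) ^ 2 + σ ^ 2 * α ^ 2) := by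
  have hd1 : (0:ℝ) < c + α ^ 2 := by positivity
  have hβα' : 0 < 1 - β * α := by linarith
  have hd2 : (0:ℝ) < σθ ^ 2 * (1 - β * α) ^ 2 + σ ^ 2 * α ^ 2 := by positivity
  rw [div_eq_div_iff (ne_of_gt hd1) (ne_of_gt hd2)] at *
  · linear_combination (σθ ^ 2 * (1 - β * α) * α) * h

set_option maxHeartbeats 1000000 in
/-- Corollary 4.2(ii): the residual posterior variance
`V = c(1 − βα)σθ²/(c + α²)`, evaluated at the unique positive root `α` of the
sensitivity quadratic, is strictly increasing in the reporting cost `c` and in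
the anchor noise `σ`. -/
theorem posterior_variance_increasing_in_cost_and_noise
    (β σθ : ℝ) (hβ : 0 < β) (hσθ : 0 < σθ) :
    (∀ σ : ℝ, 0 < σ → ∀ c₁ c₂ α₁ α₂ : ℝ,
      0 < c₁ → c₁ < c₂ → 0 < α₁ → 0 < α₂ →
      β * σθ ^ 2 * α₁ ^ 2 + (c₁ * σ ^ 2 + c₁ * β ^ 2 * σθ ^ 2 - σθ ^ 2) * α₁
        - c₁ * β * σθ ^ 2 = 0 →
      β * σθ ^ 2 * α₂ ^ 2 + (c₂ * σ ^ 2 + c₂ * β ^ 2 * σθ ^ 2 - σθ ^ 2) * α₂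
        - c₂ * β * σθ ^ 2 = 0 →
      c₁ * (1 - β * α₁) * σθ ^ 2 / (c₁ + α₁ ^ 2) <
        c₂ * (1 - β * α₂) * σθ ^ 2 / (c₂ + α₂ ^ 2)) ∧
    (∀ c : ℝ, 0 < c → ∀ σ₁ σ₂ α₁ α₂ : ℝ,
      0 < σ₁ → σ₁ < σ₂ → 0 < α₁ → 0 < α₂ →
      β * σθ ^ 2 * α₁ ^ 2 + (c * σ₁ ^ 2 + c * β ^ 2 * σθ ^ 2 - σθ ^ 2) * α₁
        - c * β * σθ ^ 2 = 0 →
      β * σθ ^ 2 * α₂ ^ 2 + (c * σ₂ ^ 2 + c * β ^ 2 * σθ ^ 2 - σθ ^ 2) * α₂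
        - c * β * σθ ^ 2 = 0 →
      c * (1 - β * α₁) * σθ ^ 2 / (c + α₁ ^ 2) <
        c * (1 - β * α₂) * σθ ^ 2 / (c + α₂ ^ 2)) := by
  constructor
  · intro σ hσ c₁ c₂ α₁ α₂ hc₁ hcc hα₁ hα₂ h1 h2
    have hc₂ : 0 < c₂ := hcc.trans' hc₁
    have hβα₁ := aux_root_lt_one β σθ σ c₁ α₁ hβ hσθ hσ hc₁ hα₁ h1
    have hβα₂ := aux_root_lt_one β σθ σ c₂ α₂ hβ hσθ hσ hc₂ hα₂ h2
    -- the root is strictly decreasing in c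
    have hD1 : 0 < (c₂ - c₁) * ((σ ^ 2 + β ^ 2 * σθ ^ 2) * α₁ - β * σθ ^ 2) := by
      have hpos : 0 < c₁ * ((σ ^ 2 + β ^ 2 * σθ ^ 2) * α₁ - β * σθ ^ 2) := by
        have : c₁ * ((σ ^ 2 + β ^ 2 * σθ ^ 2) * α₁ - β * σθ ^ 2)
            = σθ ^ 2 * α₁ * (1 - β * α₁) := by linarith [h1]
        rw [this]
        have : 0 < 1 - β * α₁ := by linarith
        positivity
      have hD : 0 < (σ ^ 2 + β ^ 2 * σθ ^ 2) * α₁ - β * σθ ^ 2 := by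
        by_contra hD
        push_neg at hD
        nlinarith [mul_nonpos_of_nonneg_of_nonpos hc₁.le hD]
      exact mul_pos (by linarith) hD
    have horder : α₂ < α₁ := by
      apply aux_root_order (β * σθ ^ 2)
        (c₂ * σ ^ 2 + c₂ * β ^ 2 * σθ ^ 2 - σθ ^ 2) (-(c₂ * β * σθ ^ 2)) α₁ α₂
        (by positivity) (by simp; positivity) hα₁ hα₂ (by linarith [h2])
      nlinarith [h1, hD1]
    rw [aux_V_identity β σθ σ c₁ α₁ hσθ hσ hc₁ hα₁ hβα₁ h1,
        aux_V_identity β σθ σ c₂ α₂ hσθ hσ hc₂ hα₂ hβα₂ h2]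
    have hb₁ : 0 < 1 - β * α₁ := by linarith
    have hb₂ : 0 < 1 - β * α₂ := by linarith
    have hd₁ : (0:ℝ) < σθ ^ 2 * (1 - β * α₁) ^ 2 + σ ^ 2 * α₁ ^ 2 := by positivity
    have hd₂ : (0:ℝ) < σθ ^ 2 * (1 - β * α₂) ^ 2 + σ ^ 2 * α₂ ^ 2 := by positivity
    rw [div_lt_div_iff₀ hd₁ hd₂]
    have hkey : (1 - β * α₁) * α₂ < (1 - β * α₂) * α₁ := by nlinarith
    have hkey2 : ((1 - β * α₁) * α₂) ^ 2 < ((1 - β * α₂) * α₁) ^ 2 := by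
      apply sq_lt_sq' (by nlinarith) hkey
    nlinarith [mul_pos (mul_pos hσθ hσθ) (mul_pos hσ hσ),
      mul_lt_mul_of_pos_left hkey2 (show (0:ℝ) < σθ ^ 4 * σ ^ 2 by positivity)]
  · intro c hc σ₁ σ₂ α₁ α₂ hσ₁ hσσ hα₁ hα₂ h1 h2
    have hσ₂ : 0 < σ₂ := hσσ.trans' hσ₁
    have hβα₁ := aux_root_lt_one β σθ σ₁ c α₁ hβ hσθ hσ₁ hc hα₁ h1
    have hβα₂ := aux_root_lt_one β σθ σ₂ c α₂ hβ hσθ hσ₂ hc hα₂ h2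
    have horder : α₂ < α₁ := by
      apply aux_root_order (β * σθ ^ 2)
        (c * σ₂ ^ 2 + c * β ^ 2 * σθ ^ 2 - σθ ^ 2) (-(c * β * σθ ^ 2)) α₁ α₂
        (by positivity) (by simp; positivity) hα₁ hα₂ (by linarith [h2])
      have : 0 < c * (σ₂ ^ 2 - σ₁ ^ 2) * α₁ := by
        have : 0 < σ₂ ^ 2 - σ₁ ^ 2 := by nlinarith
        positivity
      nlinarith [h1]
    have hd₁ : (0:ℝ) < c + α₁ ^ 2 := by positivity
    have hd₂ : (0:ℝ) < c + α₂ ^ 2 := by positivity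
    rw [div_lt_div_iff₀ hd₁ hd₂]
    have hb₁ : 0 < 1 - β * α₁ := by linarith
    have hb₂ : 0 < 1 - β * α₂ := by linarith
    have hf : 0 < c * β + α₁ + α₂ - β * α₁ * α₂ := by
      linarith [mul_pos hc hβ, mul_lt_mul_of_pos_left hβα₂ hα₁]
    have key : c * (1 - β * α₂) * σθ ^ 2 * (c + α₁ ^ 2)
        - c * (1 - β * α₁) * σθ ^ 2 * (c + α₂ ^ 2)
        = (c * σθ ^ 2) * ((α₁ - α₂) * (c * β + α₁ + α₂ - β * α₁ * α₂)) := by ring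
    linarith [mul_pos (show (0:ℝ) < c * σθ ^ 2 by positivity)
      (mul_pos (sub_pos.2 horder) hf), key]
end

section
/- Fix reals β > 0, c > 0, σ > 0, σθ > 0 and let α > 0 satisfy F(α) = β·σθ²·α² + (c·σ² + c·β²·σθ² − σθ²)·α − c·β·σθ² = 0. Then β·α < 1, the quantity 2α + β·(c − α²) is strictly positive, and c·β·σθ²·(1 − β·α)/(2α + β·(c − α²)) < c·β·σθ²/(2α). In particular the two misalignment thresholds of the sender-welfare comparative statics satisfy |d̲|² < |d̄|², i.e. |d̲| < |d̄|. -/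
/-- Corollary 4.4 (threshold ordering): at the unique positive root `α` of the
sensitivity quadratic, `βα < 1`, the denominator `2α + β(c − α²)` is positive,
and the two misalignment thresholds satisfy `|d̲|² < |d̄|²`. -/
theorem misalignment_threshold_ordering
    (β c σ σθ α : ℝ) (hβ : 0 < β) (hc : 0 < c) (hσ : 0 < σ) (hσθ : 0 < σθ)
    (hα : 0 < α)
    (hroot : β * σθ ^ 2 * α ^ 2 + (c * σ ^ 2 + c * β ^ 2 * σθ ^ 2 - σθ ^ 2) * α
      - c * β * σθ ^ 2 = 0) :
    β * α < 1 ∧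
    0 < 2 * α + β * (c - α ^ 2) ∧
    c * β * σθ ^ 2 * (1 - β * α) / (2 * α + β * (c - α ^ 2)) <
      c * β * σθ ^ 2 / (2 * α) := by
  have key : σθ ^ 2 * ((β * α - 1) * (α + c * β)) + c * σ ^ 2 * α = 0 := by
    nlinarith [hroot]
  have hba : β * α < 1 := by
    by_contra h; push_neg at h
    nlinarith [mul_nonneg (sub_nonneg.2 h) (by positivity : (0:ℝ) ≤ α + c * β),
      mul_pos (mul_pos hc (pow_pos hσ 2)) hα, pow_pos hσθ 2]
  have hD : 0 < 2 * α + β * (c - α ^ 2) := by nlinarith [mul_pos hβ hc]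
  refine ⟨hba, hD, ?_⟩
  rw [div_lt_div_iff₀ hD (by linarith : (0:ℝ) < 2 * α)]
  have hpos : 0 < c * β * σθ ^ 2 := by positivity
  nlinarith [mul_pos hpos (mul_pos hβ (pow_pos hα 2)), mul_pos hpos (mul_pos hβ hc)]
end

section
/- Let Θ = [θ̲, θ̄] with θ̲ < θ̄, let c > 0, let T : Θ → ℝ be continuous with T(θ) ≥ 0 for all θ, let b₀ : Θ → ℝ be differentiable with b₀'(θ) ≥ 0 for all θ, and let φ : ℝ → ℝ be differentiable with φ(0) = 0, φ'(0) = 0, and φ' strictly increasing. Suppose ρ : Θ → ℝ is differentiable with ρ(θ̲) = b₀(θ̲), ρ'(θ) > 0 for all θ, and c·φ'(ρ(θ) − b₀(θ))·ρ'(θ) = T(θ) for all θ ∈ Θ. Then for every θ ∈ Θ: ρ(θ) ≥ b₀(θ), and 0 ≤ c·φ(ρ(θ) − b₀(θ)) ≤ ∫_{θ̲}^{θ} T(u) du. -/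
/-!
The report gap `ρ - b₀` cannot be negative: `T ≥ 0`, `c > 0` and `ρ' > 0` force
`φ'(ρ - b₀) ≥ 0`, hence `ρ - b₀ ≥ 0` because `φ'` is strictly increasing with `φ'(0) = 0`.
The cost `c·φ(ρ - b₀)` then starts at `0` and grows at rate
`c·φ'(ρ - b₀)·(ρ' - b₀') = T - c·φ'(ρ - b₀)·b₀' ≤ T`, so it never exceeds `∫ T`;
it is nonnegative because `φ` increases on `[0, ∞)`.
-/

open Set MeasureTheory

theorem nonneg_of_hasDerivAt_of_monotone {φ φ' : ℝ → ℝ} (hφ : ∀ u, HasDerivAt φ (φ' u) u)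
    (hφ0 : φ 0 = 0) (hφ'0 : φ' 0 = 0) (hφ' : Monotone φ') {x : ℝ} (hx : 0 ≤ x) : 0 ≤ φ x := by
  have hmono : MonotoneOn φ (Ici 0) := by
    refine monotoneOn_of_hasDerivWithinAt_nonneg (convex_Ici 0)
      (fun u _ ↦ (hφ u).continuousAt.continuousWithinAt) (fun u _ ↦ (hφ u).hasDerivWithinAt) ?_
    intro u hu
    rw [interior_Ici] at hu
    exact hφ'0 ▸ hφ' hu.le
  simpa [hφ0] using hmono self_mem_Ici hx hx

theorem sub_le_integral_of_hasDerivWithinAt_Icc {f f' g : ℝ → ℝ} {a b : ℝ} (hab : a ≤ b)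
    (hf : ∀ x ∈ Icc a b, HasDerivWithinAt f (f' x) (Icc a b) x)
    (hg : IntegrableOn g (Icc a b)) (hf'g : ∀ x ∈ Ioo a b, f' x ≤ g x) :
    f b - f a ≤ ∫ x in a..b, g x := by
  refine intervalIntegral.sub_le_integral_of_hasDeriv_right_of_le hab
    (fun x hx ↦ (hf x hx).continuousWithinAt) (fun x hx ↦ ?_) hg hf'g
  exact ((hf x (Ioo_subset_Icc_self hx)).hasDerivAt (Icc_mem_nhds hx.1 hx.2)).hasDerivWithinAt

theorem separating_cost_bound_general
    (θl θu : ℝ) (c : ℝ) (hc : 0 < c)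
    (T : ℝ → ℝ)
    (hTcont : ContinuousOn T (Set.Icc θl θu))
    (hTnn : ∀ θ ∈ Set.Icc θl θu, 0 ≤ T θ)
    (b₀ b₀' : ℝ → ℝ)
    (hb₀ : ∀ θ ∈ Set.Icc θl θu, HasDerivWithinAt b₀ (b₀' θ) (Set.Icc θl θu) θ)
    (hb₀nn : ∀ θ ∈ Set.Icc θl θu, 0 ≤ b₀' θ)
    (φ φ' : ℝ → ℝ)
    (hφ : ∀ u, HasDerivAt φ (φ' u) u)
    (hφ0 : φ 0 = 0) (hφ'0 : φ' 0 = 0) (hφ'mono : StrictMono φ')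
    (ρ ρ' : ℝ → ℝ)
    (hρ : ∀ θ ∈ Set.Icc θl θu, HasDerivWithinAt ρ (ρ' θ) (Set.Icc θl θu) θ)
    (hρ0 : ρ θl = b₀ θl)
    (hρ'pos : ∀ θ ∈ Set.Icc θl θu, 0 < ρ' θ)
    (hode : ∀ θ ∈ Set.Icc θl θu, c * φ' (ρ θ - b₀ θ) * ρ' θ = T θ) :
    ∀ θ ∈ Set.Icc θl θu,
      b₀ θ ≤ ρ θ ∧
      0 ≤ c * φ (ρ θ - b₀ θ) ∧
      c * φ (ρ θ - b₀ θ) ≤ ∫ u in θl..θ, T u := by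
  have hφ'nn : ∀ θ ∈ Icc θl θu, 0 ≤ φ' (ρ θ - b₀ θ) := fun θ hθ ↦
    nonneg_of_mul_nonneg_left (by linarith [hode θ hθ, hTnn θ hθ]) (mul_pos hc (hρ'pos θ hθ))
  have hgap : ∀ θ ∈ Icc θl θu, 0 ≤ ρ θ - b₀ θ := fun θ hθ ↦
    hφ'mono.le_iff_le.mp (by rw [hφ'0]; exact hφ'nn θ hθ)
  have hcost : ∀ θ ∈ Icc θl θu, HasDerivWithinAt (fun x ↦ c * φ (ρ x - b₀ x))
      (c * (φ' (ρ θ - b₀ θ) * (ρ' θ - b₀' θ))) (Icc θl θu) θ := fun θ hθ ↦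
    ((hφ _).comp_hasDerivWithinAt θ ((hρ θ hθ).sub (hb₀ θ hθ))).const_mul c
  intro θ hθ
  have hsub : Icc θl θ ⊆ Icc θl θu := Icc_subset_Icc_right hθ.2
  refine ⟨sub_nonneg.mp (hgap θ hθ),
    mul_nonneg hc.le (nonneg_of_hasDerivAt_of_monotone hφ hφ0 hφ'0 hφ'mono.monotone (hgap θ hθ)),
    ?_⟩
  have hbound := sub_le_integral_of_hasDerivWithinAt_Icc hθ.1
    (fun x hx ↦ (hcost x (hsub hx)).mono hsub) (hTcont.mono hsub).integrableOn_Icc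
    (fun x hx ↦ by
      have hx' := hsub (Ioo_subset_Icc_self hx)
      linarith [hode x hx', mul_nonneg (mul_nonneg hc.le (hφ'nn x hx')) (hb₀nn x hx')])
  simpa [hρ0, hφ0] using hbound

/-- The least-cost separating cost bound from the proofs of Proposition 4.2 and
Theorem 4.3: along the deterministic separating rule `ρ` with
`c·φ'(ρ − b₀)·ρ' = T` and `ρ(θ̲) = b₀(θ̲)`, the report exceeds the anchor and
the reporting cost satisfies `0 ≤ c·φ(ρ(θ) − b₀(θ)) ≤ Γ(θ) = ∫_{θ̲}^θ T`. -/
theorem separating_cost_bound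
    (θl θu : ℝ) (hθ : θl < θu) (c : ℝ) (hc : 0 < c)
    (T : ℝ → ℝ)
    (hTcont : ContinuousOn T (Set.Icc θl θu))
    (hTnn : ∀ θ ∈ Set.Icc θl θu, 0 ≤ T θ)
    (b₀ b₀' : ℝ → ℝ)
    (hb₀ : ∀ θ ∈ Set.Icc θl θu, HasDerivWithinAt b₀ (b₀' θ) (Set.Icc θl θu) θ)
    (hb₀nn : ∀ θ ∈ Set.Icc θl θu, 0 ≤ b₀' θ)
    (φ φ' : ℝ → ℝ)
    (hφ : ∀ u, HasDerivAt φ (φ' u) u)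
    (hφ0 : φ 0 = 0) (hφ'0 : φ' 0 = 0) (hφ'mono : StrictMono φ')
    (ρ ρ' : ℝ → ℝ)
    (hρ : ∀ θ ∈ Set.Icc θl θu, HasDerivWithinAt ρ (ρ' θ) (Set.Icc θl θu) θ)
    (hρ0 : ρ θl = b₀ θl)
    (hρ'pos : ∀ θ ∈ Set.Icc θl θu, 0 < ρ' θ)
    (hode : ∀ θ ∈ Set.Icc θl θu, c * φ' (ρ θ - b₀ θ) * ρ' θ = T θ) :
    ∀ θ ∈ Set.Icc θl θu,
      b₀ θ ≤ ρ θ ∧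
      0 ≤ c * φ (ρ θ - b₀ θ) ∧
      c * φ (ρ θ - b₀ θ) ≤ ∫ u in θl..θ, T u :=
  separating_cost_bound_general θl θu c hc T hTcont hTnn b₀ b₀' hb₀ hb₀nn φ φ' hφ hφ0 hφ'0 hφ'mono ρ
    ρ' hρ hρ0 hρ'pos hode
end

section
/- Let μ be a probability measure on ℝ, let s : ℝ → ℝ be nondecreasing, bounded and measurable, and let p : ℝ → ℝ be nonincreasing and measurable with 0 ≤ p(θ) ≤ 1 for all θ. Let θ⁻ < θ⁺ be reals such that m₋ = μ((−∞, θ⁻]) > 0 and m₊ = μ([θ⁺, ∞)) > 0, and let δ_s > 0 and δ_p > 0 satisfy s(θ⁺) − s(θ⁻) ≥ δ_s and p(θ⁻) − p(θ⁺) ≥ δ_p. Then ∫ s·p dμ − (∫ s dμ)·(∫ p dμ) ≤ −δ_s · δ_p · m₋ · m₊. -/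
/-!
Symmetrize: for independent copies `x, y` of `θ`,
`2 (E[s p] - E[s] E[p]) = E[(s x - s y) (p x - p y)]`.
Since `s` increases and `p` decreases, the integrand is never positive, and on the two
disjoint corners `{x ≤ θ⁻, y ≥ θ⁺}` and `{x ≥ θ⁺, y ≤ θ⁻}`, each of mass `m₋ m₊`, it is at most
`-δ_s δ_p`.
-/

open MeasureTheory

lemma sub_mul_sub_eq_add_sub_sub {R : Type*} [CommRing R] (a b c d : R) :
    (a - b) * (c - d) = a * c + b * d - a * d - b * c := by
  ring

section Corners

variable {α : Type*} [LinearOrder α] {s p : α → ℝ}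

theorem sub_mul_sub_nonpos_of_monotone_of_antitone (hs : Monotone s) (hp : Antitone p)
    (x y : α) : (s x - s y) * (p x - p y) ≤ 0 := by
  rcases le_total x y with hxy | hyx
  · exact mul_nonpos_of_nonpos_of_nonneg (sub_nonpos.2 (hs hxy)) (sub_nonneg.2 (hp hxy))
  · exact mul_nonpos_of_nonneg_of_nonpos (sub_nonneg.2 (hs hyx)) (sub_nonpos.2 (hp hyx))

theorem sub_mul_sub_le_neg_mul_of_gap (hs : Monotone s) (hp : Antitone p) {a b x y : α}
    (hab : a ≤ b) (hxa : x ≤ a) (hby : b ≤ y) {δs δp : ℝ} (hδp : 0 ≤ δp)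
    (hgap_s : δs ≤ s b - s a) (hgap_p : δp ≤ p a - p b) :
    (s x - s y) * (p x - p y) ≤ -(δs * δp) := by
  have hs_gap : δs ≤ s y - s x := by linarith [hs hxa, hs hby]
  have hp_gap : δp ≤ p x - p y := by linarith [hp hxa, hp hby]
  have := mul_le_mul hs_gap hp_gap hδp (sub_nonneg.2 (hs (hxa.trans (hab.trans hby))))
  linarith

end Corners

section ProductIntegral

variable {Ω : Type*} [MeasurableSpace Ω] {μ : Measure Ω} {f g : Ω → ℝ}

theorem integrable_prod_sub_mul_sub [IsFiniteMeasure μ] (hf : Integrable f μ)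
    (hg : Integrable g μ) (hfg : Integrable (fun x ↦ f x * g x) μ) :
    Integrable (fun z : Ω × Ω ↦ (f z.1 - f z.2) * (g z.1 - g z.2)) (μ.prod μ) := by
  simp_rw [sub_mul_sub_eq_add_sub_sub]
  exact (((hfg.comp_fst μ).add (hfg.comp_snd μ)).sub (hf.mul_prod hg)).sub (hf.mul_prod hg).swap

theorem integral_prod_sub_mul_sub [IsProbabilityMeasure μ] (hf : Integrable f μ)
    (hg : Integrable g μ) (hfg : Integrable (fun x ↦ f x * g x) μ) :
    ∫ z, (f z.1 - f z.2) * (g z.1 - g z.2) ∂μ.prod μ =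
      2 * ((∫ x, f x * g x ∂μ) - (∫ x, f x ∂μ) * ∫ x, g x ∂μ) := by
  have h₁ : Integrable (fun z : Ω × Ω ↦ f z.1 * g z.1) (μ.prod μ) := hfg.comp_fst μ
  have h₂ : Integrable (fun z : Ω × Ω ↦ f z.2 * g z.2) (μ.prod μ) := hfg.comp_snd μ
  have h₃ : Integrable (fun z : Ω × Ω ↦ f z.1 * g z.2) (μ.prod μ) := hf.mul_prod hg
  have h₄ : Integrable (fun z : Ω × Ω ↦ f z.2 * g z.1) (μ.prod μ) := h₃.swap
  have hswap : ∫ z : Ω × Ω, f z.2 * g z.1 ∂μ.prod μ = ∫ z : Ω × Ω, f z.1 * g z.2 ∂μ.prod μ := by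
    simpa using (integral_prod_swap (μ := μ) (ν := μ) (fun z : Ω × Ω ↦ f z.2 * g z.1)).symm
  simp_rw [sub_mul_sub_eq_add_sub_sub]
  rw [integral_sub ?_ h₄, integral_sub ?_ h₃, integral_add h₁ h₂, hswap, integral_prod_mul f g,
    integral_fun_fst (fun x ↦ f x * g x), integral_fun_snd (fun x ↦ f x * g x)]
  · simp only [probReal_univ, one_smul]
    ring
  · exact h₁.add h₂
  · exact (h₁.add h₂).sub h₃

theorem integral_prod_le_of_le_on_corners [IsFiniteMeasure μ] {F : Ω × Ω → ℝ}
    (hF : Integrable F (μ.prod μ)) (hF_nonpos : ∀ z, F z ≤ 0)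
    {A B : Set Ω} (hA : MeasurableSet A) (hB : MeasurableSet B) (hAB : Disjoint A B) {c : ℝ}
    (hF_corner : ∀ x ∈ A, ∀ y ∈ B, F (x, y) ≤ -c ∧ F (y, x) ≤ -c) :
    ∫ z, F z ∂μ.prod μ ≤ -c * (2 * μ.real A * μ.real B) := by
  set K := A ×ˢ B ∪ B ×ˢ A
  have hK : MeasurableSet K := (hA.prod hB).union (hB.prod hA)
  have hF_le : ∀ z, F z ≤ K.indicator (fun _ ↦ -c) z := by
    rintro ⟨x, y⟩
    by_cases hz : (x, y) ∈ K
    · rw [Set.indicator_of_mem hz]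
      rcases hz with ⟨hx, hy⟩ | ⟨hx, hy⟩
      exacts [(hF_corner x hx y hy).1, (hF_corner y hy x hx).2]
    · rw [Set.indicator_of_notMem hz]
      exact hF_nonpos _
  have hK_real : (μ.prod μ).real K = 2 * μ.real A * μ.real B := by
    have hdisj : Disjoint (A ×ˢ B) (B ×ˢ A) := Set.disjoint_prod.2 (Or.inl hAB)
    rw [measureReal_union hdisj (hB.prod hA), measureReal_prod_prod, measureReal_prod_prod]
    ring
  calc ∫ z, F z ∂μ.prod μ ≤ ∫ z, K.indicator (fun _ ↦ -c) z ∂μ.prod μ :=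
        integral_mono hF ((integrable_const _).indicator hK) hF_le
    _ = -c * (2 * μ.real A * μ.real B) := by
        rw [integral_indicator_const _ hK, hK_real, smul_eq_mul, mul_comm]

end ProductIntegral

theorem fkg_covariance_bound_general
    (μ : Measure ℝ) [IsProbabilityMeasure μ]
    (s p : ℝ → ℝ)
    (hs_mono : Monotone s) (hs_meas : Measurable s)
    (hs_bdd : ∃ C : ℝ, ∀ θ, |s θ| ≤ C)
    (hp_anti : Antitone p) (hp_meas : Measurable p)
    (hp01 : ∀ θ, 0 ≤ p θ ∧ p θ ≤ 1)
    (θm θp : ℝ) (hθ : θm < θp)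
    (δs δp : ℝ) (hδp : 0 < δp)
    (hgap_s : δs ≤ s θp - s θm)
    (hgap_p : δp ≤ p θm - p θp) :
    (∫ θ, s θ * p θ ∂μ) - (∫ θ, s θ ∂μ) * (∫ θ, p θ ∂μ) ≤
      -δs * δp * (μ (Set.Iic θm)).toReal * (μ (Set.Ici θp)).toReal := by
  obtain ⟨C, hC⟩ := hs_bdd
  have hp_le : ∀ θ, |p θ| ≤ 1 := fun θ ↦ abs_le.2 ⟨by linarith [hp01 θ], (hp01 θ).2⟩
  have hs_int : Integrable s μ :=
    .of_bound hs_meas.aestronglyMeasurable C (.of_forall hC)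
  have hp_int : Integrable p μ :=
    .of_bound hp_meas.aestronglyMeasurable 1 (.of_forall hp_le)
  have hsp_int : Integrable (fun θ ↦ s θ * p θ) μ :=
    hp_int.bdd_mul hs_meas.aestronglyMeasurable (.of_forall hC)
  have hcorners := integral_prod_le_of_le_on_corners (μ := μ)
    (integrable_prod_sub_mul_sub hs_int hp_int hsp_int)
    (fun z ↦ sub_mul_sub_nonpos_of_monotone_of_antitone hs_mono hp_anti z.1 z.2)
    measurableSet_Iic measurableSet_Ici (Set.Iic_disjoint_Ici.2 (not_le.2 hθ)) (c := δs * δp)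
    fun x hx y hy ↦
      have h := sub_mul_sub_le_neg_mul_of_gap hs_mono hp_anti hθ.le hx hy hδp.le hgap_s hgap_p
      ⟨h, by linear_combination h⟩
  rw [integral_prod_sub_mul_sub hs_int hp_int hsp_int] at hcorners
  simp only [measureReal_def] at hcorners
  linarith

/-- The quantitative FKG–Chebyshev covariance bound from the proof of
Proposition 4.1: for a nondecreasing bounded `s` and a nonincreasing
`[0,1]`-valued `p`, with mass `m₋` below `θ⁻`, mass `m₊` above `θ⁺`, and gaps
`δ_s`, `δ_p`, the covariance is at most `−δ_s·δ_p·m₋·m₊`. -/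
theorem fkg_covariance_bound
    (μ : Measure ℝ) [IsProbabilityMeasure μ]
    (s p : ℝ → ℝ)
    (hs_mono : Monotone s) (hs_meas : Measurable s)
    (hs_bdd : ∃ C : ℝ, ∀ θ, |s θ| ≤ C)
    (hp_anti : Antitone p) (hp_meas : Measurable p)
    (hp01 : ∀ θ, 0 ≤ p θ ∧ p θ ≤ 1)
    (θm θp : ℝ) (hθ : θm < θp)
    (hmm : 0 < (μ (Set.Iic θm)).toReal)
    (hmp : 0 < (μ (Set.Ici θp)).toReal)
    (δs δp : ℝ) (hδs : 0 < δs) (hδp : 0 < δp)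
    (hgap_s : δs ≤ s θp - s θm)
    (hgap_p : δp ≤ p θm - p θp) :
    (∫ θ, s θ * p θ ∂μ) - (∫ θ, s θ ∂μ) * (∫ θ, p θ ∂μ) ≤
      -δs * δp * (μ (Set.Iic θm)).toReal * (μ (Set.Ici θp)).toReal :=
  fkg_covariance_bound_general μ s p hs_mono hs_meas hs_bdd hp_anti hp_meas hp01 θm θp hθ δs δp hδp
    hgap_s hgap_p
end
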